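/- arXiv:math/0609552 — 3 statements merged into one kernel-verified Lean document; each statement's English description precedes it below -/
import Mathlib

section
/- Let 𝒜 = (Q, q₀, E) be a trim dual automaton over Ã, let H = L(𝒜)ρ, and let w be a nonempty word over Ã. If 𝓑 is the expansion of 𝒜 by (q₀, w, q₀), then L(𝓑)ρ is the subgroup of F(A) generated by H and wρ, i.e. L(𝓑)ρ = ⟨H, wρ⟩. -/
open Function

/-- A letter of the symmetrized alphabet Ã: `(a, true)` stands for `a ∈ A` and
`(a, false)` for `a⁻¹ ∈ A⁻¹`. -/
abbrev Ltr (A : Type) := A × Bool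

/-- Inversion of letters of Ã. -/
def Ltr.inv {A : Type} (x : Ltr A) : Ltr A := (x.1, !x.2)

/-- The inverse `u⁻¹` of a word `u` over Ã. -/
def wordInv {A : Type} (w : List (Ltr A)) : List (Ltr A) := (w.map Ltr.inv).reverse

/-- A word over Ã is reduced iff it has no factor of the form `a a⁻¹` or `a⁻¹ a`. -/
def IsReducedWord {A : Type} (w : List (Ltr A)) : Prop :=
  ∀ (u v : List (Ltr A)) (a : A) (b : Bool), w ≠ u ++ (a, b) :: (a, !b) :: v

/-- An automaton over the symmetrized alphabet Ã, with a bundled state type `Q`,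
an initial state `q0` and a set `E` of transitions. -/
structure Autom (A : Type) : Type 1 where
  Q : Type
  q0 : Q
  E : Set (Q × Ltr A × Q)

namespace Autom

variable {A : Type}

/-- Paths using only transitions in the set `T`. -/
inductive PathOn (M : Autom A) (T : Set (M.Q × Ltr A × M.Q)) :
    M.Q → List (Ltr A) → M.Q → Prop
  | nil (q : M.Q) : PathOn M T q [] q
  | cons {p q r : M.Q} {a : Ltr A} {w : List (Ltr A)} :
      (p, a, q) ∈ T → PathOn M T q w r → PathOn M T p (a :: w) r

/-- `M.Path p u q` : the word `u` labels a path from state `p` to state `q` in `M`. -/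
def Path (M : Autom A) : M.Q → List (Ltr A) → M.Q → Prop := M.PathOn M.E

/-- The language L(𝒜) of words labeling a path from `q0` to `q0`. -/
def lang (M : Autom A) : Set (List (Ltr A)) := {w | M.Path M.q0 w M.q0}

/-- The set L(𝒜)ρ of reductions (in the free group `F(A)`) of words of L(𝒜). -/
def langRho (M : Autom A) : Set (FreeGroup A) := FreeGroup.mk '' M.lang

/-- Dual automaton: `(p,a,q)` is an edge iff `(q,a⁻¹,p)` is one. -/
def Dual (M : Autom A) : Prop := ∀ p a q, (p, a, q) ∈ M.E ↔ (q, Ltr.inv a, p) ∈ M.E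

/-- Deterministic automaton. -/
def Deterministic (M : Autom A) : Prop :=
  ∀ p a q q', (p, a, q) ∈ M.E → (p, a, q') ∈ M.E → q = q'

/-- Trim automaton: every state lies on a path from `q0` to `q0`. -/
def Trim (M : Autom A) : Prop := ∀ q, ∃ u v, M.Path M.q0 u q ∧ M.Path q v M.q0

/-- Inverse automaton: deterministic, trim and dual. -/
def IsInv (M : Autom A) : Prop := M.Deterministic ∧ M.Trim ∧ M.Dual

/-- Reduced automaton: every state lies on a path from `q0` to `q0` labeled by
a reduced word. -/
def IsRed (M : Autom A) : Prop :=
  ∀ q, ∃ u v, IsReducedWord (u ++ v) ∧ M.Path M.q0 u q ∧ M.Path q v M.q0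

/-- Homomorphisms of automata. -/
def IsHom (M N : Autom A) (φ : M.Q → N.Q) : Prop :=
  φ M.q0 = N.q0 ∧ ∀ p a q, (p, a, q) ∈ M.E → (φ p, a, φ q) ∈ N.E

/-- Isomorphism of automata. -/
def Isomorphic (M N : Autom A) : Prop :=
  ∃ φ : M.Q ≃ N.Q, M.IsHom N φ ∧ N.IsHom M φ.symm

/-- `N` is (isomorphic to) the automaton obtained from `M` by identifying the two
states `p` and `q`. -/
def IsIdentification (M : Autom A) (p q : M.Q) (N : Autom A) : Prop :=
  ∃ φ : M.Q → N.Q,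
    Surjective φ ∧ φ M.q0 = N.q0 ∧
    (∀ x y, φ x = φ y ↔ x = y ∨ (x = p ∧ y = q) ∨ (x = q ∧ y = p)) ∧
    (∀ e : N.Q × Ltr A × N.Q, e ∈ N.E ↔ ∃ e' ∈ M.E, e = (φ e'.1, e'.2.1, φ e'.2.2))

/-- `N` is (isomorphic to) the automaton obtained from `M` by deleting the state `q`
and all transitions involving it. -/
def IsDeletion (M : Autom A) (q : M.Q) (N : Autom A) : Prop :=
  ∃ φ : N.Q → M.Q,
    Injective φ ∧ Set.range φ = {x | x ≠ q} ∧ φ N.q0 = M.q0 ∧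
    (∀ e : N.Q × Ltr A × N.Q, e ∈ N.E ↔ (φ e.1, e.2.1, φ e.2.2) ∈ M.E)

/-- Elementary reduction of type 1. -/
def Red1 (M N : Autom A) : Prop :=
  ∃ p q r a, p ≠ q ∧ (r, a, p) ∈ M.E ∧ (r, a, q) ∈ M.E ∧ M.IsIdentification p q N

/-- Elementary reduction of type 2. -/
def Red2 (M N : Autom A) : Prop :=
  ∃ (p q : M.Q) (a : Ltr A), q ≠ M.q0 ∧ (p, a, q) ∈ M.E ∧ (q, Ltr.inv a, p) ∈ M.E ∧
    (∀ e ∈ M.E, e.1 = q ∨ e.2.2 = q → e = (p, a, q) ∨ e = (q, Ltr.inv a, p)) ∧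
    M.IsDeletion q N

/-- `N` is (isomorphic to) the reduction `Mρ` of `M`: perform elementary reductions
of type 1 until the automaton is deterministic, then elementary reductions of type 2
until none is possible. -/
def ReductionOf (M N : Autom A) : Prop :=
  ∃ M₁, Relation.ReflTransGen Red1 M M₁ ∧ M₁.Deterministic ∧
    Relation.ReflTransGen Red2 M₁ N ∧ ∀ N', ¬ Red2 N N'

/-- `N` is (isomorphic to) the expansion of `M` by `(p, w, q)`: a new path labeled `w`
from `p` to `q` (together with its inverse path) whose intermediate states are new. -/
def IsExpansion (M : Autom A) (p : M.Q) (w : List (Ltr A)) (q : M.Q) (N : Autom A) : Prop :=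
  w ≠ [] ∧
  ∃ (φ : M.Q → N.Q) (c : Fin (w.length + 1) → N.Q),
    Injective φ ∧ φ M.q0 = N.q0 ∧ c 0 = φ p ∧ c (Fin.last w.length) = φ q ∧
    (∀ i : Fin (w.length + 1), 0 < (i : ℕ) → (i : ℕ) < w.length → c i ∉ Set.range φ) ∧
    (∀ i j : Fin (w.length + 1), 0 < (i : ℕ) → (i : ℕ) < w.length → c i = c j → i = j) ∧
    (∀ x : N.Q, (∃ y, φ y = x) ∨ ∃ i, c i = x) ∧
    (∀ e : N.Q × Ltr A × N.Q, e ∈ N.E ↔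
      ((∃ e' ∈ M.E, e = (φ e'.1, e'.2.1, φ e'.2.2)) ∨
        ∃ i : Fin w.length,
          e = (c i.castSucc, w.get i, c i.succ) ∨
          e = (c i.succ, Ltr.inv (w.get i), c i.castSucc)))

/-- `M →exp^{(p,w,q)} N` : `N` is (isomorphic to) the reduction of the expansion
of `M` by `(p,w,q)`. -/
def ExpStep (M : Autom A) (p : M.Q) (w : List (Ltr A)) (q : M.Q) (N : Autom A) : Prop :=
  ∃ N' N'', M.IsExpansion p w q N' ∧ ReductionOf N' N'' ∧ Isomorphic N'' N

/-- `M →re^{(p,w,q)} N` : a reduced expansion, i.e. an expansion-then-reduction in which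
`M` embeds in `N`. -/
def REStep (M : Autom A) (p : M.Q) (w : List (Ltr A)) (q : M.Q) (N : Autom A) : Prop :=
  M.ExpStep p w q N ∧ ∃ ψ : M.Q → N.Q, Injective ψ ∧ M.IsHom N ψ

/-- `M →e^{w} N` : an e-step, i.e. `M →exp^{(q0,w,q0)} N`. -/
def EStep (M : Autom A) (w : List (Ltr A)) (N : Autom A) : Prop :=
  M.ExpStep M.q0 w M.q0 N

/-- `M →i^{p=q} N` : an i-step; `N` is (isomorphic to) the reduction of the automaton
obtained from `M` by identifying the distinct states `p` and `q`. -/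
def IStep (M : Autom A) (p q : M.Q) (N : Autom A) : Prop :=
  p ≠ q ∧ ∃ N' N'', M.IsIdentification p q N' ∧ ReductionOf N' N'' ∧ Isomorphic N'' N

/-- i-step, allowing `p = q` (in which case nothing happens). -/
def IStep' (M : Autom A) (p q : M.Q) (N : Autom A) : Prop :=
  (p = q ∧ M.Isomorphic N) ∨ M.IStep p q N

/-- `M →i N` : some i-step applies. -/
def IStepAny (M N : Autom A) : Prop := ∃ p q, M.IStep p q N

/-- Some reduced expansion (by a nonempty reduced word) applies. -/
def REStepAny (M N : Autom A) : Prop :=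
  ∃ p w q, IsReducedWord w ∧ M.REStep p w q N

/-- `M` is (isomorphic to) `Γ_A(H)` : a reduced inverse automaton with `L(M)ρ = H`. -/
def Represents (M : Autom A) (H : Subgroup (FreeGroup A)) : Prop :=
  M.IsInv ∧ M.IsRed ∧ M.langRho = ↑H

/-- The `q0`-diameter of an automaton: the maximum over all states `q` of the minimal
length of a reduced word labeling a path from `q0` to `q`. -/
noncomputable def diam (M : Autom A) : ℕ :=
  ⨆ q : M.Q, sInf {n | ∃ u, IsReducedWord u ∧ u.length = n ∧ M.Path M.q0 u q}

end Autom

/-- `S` is a basis of the subgroup `H`: `S` generates `H` and freely so. -/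
def IsFreeBasis {G : Type} [Group G] (S : Set G) (H : Subgroup G) : Prop :=
  Subgroup.closure S = H ∧
    Injective (FreeGroup.lift (Subtype.val : S → G) : FreeGroup S →* G)

/-- `H ≤ff K` : `H` is a free factor of `K`. -/
def FreeFactor {G : Type} [Group G] (H K : Subgroup G) : Prop :=
  ∃ B C : Set G, IsFreeBasis B H ∧ IsFreeBasis C K ∧ B ⊆ C

/-- The rank of a subgroup: the cardinality of a basis (the common value of
the cardinalities of all bases, when `H` is a finite-rank free group). -/
noncomputable def rk {G : Type} [Group G] (H : Subgroup G) : ℕ :=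
  sInf {n | ∃ S : Set G, IsFreeBasis S H ∧ S.ncard = n}

/-- `L` is a graphical free factor of `K` with respect to `A`: `Γ_A(L)` embeds
in `Γ_A(K)`. -/
def GraphicalFF {A : Type} (L K : Subgroup (FreeGroup A)) : Prop :=
  L ≤ K ∧ ∃ ML MK : Autom A, ML.Represents L ∧ MK.Represents K ∧
    ∃ ψ : ML.Q → MK.Q, Injective ψ ∧ ML.IsHom MK ψ

/-- A step (i-step or reduced expansion) from `M` to `N` of cost `c`. -/
def StepCost {A : Type} (M N : Autom A) (c : ℕ) : Prop :=
  (c = 0 ∧ Autom.IStepAny M N) ∨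
  (∃ p w q, IsReducedWord w ∧ w.length = c ∧ M.REStep p w q N)

/-- The well-order `≺` on cost sequences. -/
def costLT (k l : List ℕ) : Prop :=
  k.length < l.length ∨
  (k.length = l.length ∧ k.sum < l.sum) ∨
  (k.length = l.length ∧ k.sum = l.sum ∧ List.Lex (· < ·) k l)

namespace Autom

variable {A : Type}

lemma PathOn.append' {M : Autom A} {T : Set (M.Q × Ltr A × M.Q)} {p q r : M.Q}
    {u v : List (Ltr A)} (h1 : M.PathOn T p u q) (h2 : M.PathOn T q v r) :
    M.PathOn T p (u ++ v) r := by
  induction h1 with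
  | nil _ => exact h2
  | cons he _ ih => exact .cons he (ih h2)

lemma Path.append'' {M : Autom A} {p q r : M.Q} {u v : List (Ltr A)}
    (h1 : M.Path p u q) (h2 : M.Path q v r) : M.Path p (u ++ v) r :=
  PathOn.append' h1 h2

lemma Path.dualRev {M : Autom A} (hd : M.Dual) {p q : M.Q} {u : List (Ltr A)}
    (h : M.Path p u q) : M.Path q (wordInv u) p := by
  induction h with
  | nil _ => exact .nil _
  | @cons p' q' r' a' w' he _ ih =>
      have hrw : wordInv (a' :: w') = wordInv w' ++ [Ltr.inv a'] := by
        simp [wordInv]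
      rw [hrw]
      exact ih.append'' (.cons ((hd _ _ _).mp he) (.nil _))

end Autom

lemma mk_wordInv {A : Type} (u : List (Ltr A)) :
    FreeGroup.mk (wordInv u) = (FreeGroup.mk u)⁻¹ := by
  rw [FreeGroup.inv_mk]; rfl

lemma mk_inv_single {A : Type} (z : Ltr A) :
    FreeGroup.mk [Ltr.inv z] = (FreeGroup.mk [z])⁻¹ := by
  rw [FreeGroup.inv_mk]; rfl

lemma mk_cons {A : Type} (a : Ltr A) (u : List (Ltr A)) :
    FreeGroup.mk (a :: u) = FreeGroup.mk [a] * FreeGroup.mk u := by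
  rw [FreeGroup.mul_mk]; rfl

/-- Invariant for the main induction in Proposition 1.2. -/
def ExpCond {A : Type} (w : List (Ltr A)) (S : Subgroup (FreeGroup A))
    (M N : Autom A) (φ : M.Q → N.Q) (c : Fin (w.length + 1) → N.Q)
    (x : N.Q) (g : FreeGroup A) : Prop :=
  (∀ y, x = φ y → ∀ v, M.Path y v M.q0 → g * FreeGroup.mk v ∈ S) ∧
  (∀ j : Fin (w.length + 1), x = c j → g * (FreeGroup.mk (w.take (j : ℕ)))⁻¹ ∈ S)
/-- Proposition 1.2: if `N` is the expansion of the trim dual automaton `M`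
by `(q₀, w, q₀)`, then `L(N)ρ` is the subgroup generated by `L(M)ρ` and `wρ`. -/
theorem expansion_langRho_eq_closure
    {A : Type} (M : Autom A) (htrim : M.Trim) (hdual : M.Dual)
    (w : List (Ltr A)) (hw : w ≠ [])
    (N : Autom A) (hN : M.IsExpansion M.q0 w M.q0 N) :
    N.langRho = ↑(Subgroup.closure (M.langRho ∪ {FreeGroup.mk w})) := by
  obtain ⟨hw', φ, c, hinj, hq0, hc0, hclast, hint, hcinj, hcov, hE⟩ := hN
  set S := Subgroup.closure (M.langRho ∪ {FreeGroup.mk w}) with hSdef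
  have mk_nil : FreeGroup.mk ([] : List (Ltr A)) = 1 := rfl
  have hwS : FreeGroup.mk w ∈ S := Subgroup.subset_closure (Or.inr rfl)
  have hMS : ∀ v, M.Path M.q0 v M.q0 → FreeGroup.mk v ∈ S := fun v hv =>
    Subgroup.subset_closure (Or.inl ⟨v, hv, rfl⟩)
  have htakeS : ∀ j : Fin (w.length + 1), ((j : ℕ) = 0 ∨ (j : ℕ) = w.length) →
      FreeGroup.mk (w.take (j : ℕ)) ∈ S := by
    rintro j (h | h) <;> rw [h]
    · rw [List.take_zero, mk_nil]; exact one_mem S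
    · rw [List.take_length]; exact hwS
  have hctake : ∀ j1 j2 : Fin (w.length + 1), c j1 = c j2 →
      FreeGroup.mk (w.take (j1 : ℕ)) * (FreeGroup.mk (w.take (j2 : ℕ)))⁻¹ ∈ S := by
    intro j1 j2 hc
    by_cases h1 : 0 < (j1 : ℕ) ∧ (j1 : ℕ) < w.length
    · obtain rfl := hcinj j1 j2 h1.1 h1.2 hc
      rw [mul_inv_cancel]; exact one_mem S
    · by_cases h2 : 0 < (j2 : ℕ) ∧ (j2 : ℕ) < w.length
      · obtain rfl := hcinj j2 j1 h2.1 h2.2 hc.symm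
        rw [mul_inv_cancel]; exact one_mem S
      · push_neg at h1 h2
        have e1 : (j1 : ℕ) = 0 ∨ (j1 : ℕ) = w.length := by
          have := j1.isLt; omega
        have e2 : (j2 : ℕ) = 0 ∨ (j2 : ℕ) = w.length := by
          have := j2.isLt; omega
        exact mul_mem (htakeS _ e1) (inv_mem (htakeS _ e2))
  have hcnotφ : ∀ (j : Fin (w.length + 1)) (y : M.Q), c j = φ y →
      ((j : ℕ) = 0 ∨ (j : ℕ) = w.length) := by
    intro j y hj
    by_contra h
    push_neg at h
    have h0 : 0 < (j : ℕ) := Nat.pos_of_ne_zero h.1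
    have hlt : (j : ℕ) < w.length := lt_of_le_of_ne (Nat.lt_succ_iff.mp j.isLt) h.2
    exact hint j h0 hlt ⟨y, hj.symm⟩
  have hcq0 : ∀ (j : Fin (w.length + 1)), ((j : ℕ) = 0 ∨ (j : ℕ) = w.length) →
      c j = φ M.q0 := by
    rintro j (h | h)
    · have : j = 0 := Fin.ext h
      rw [this, hc0]
    · have : j = Fin.last w.length := Fin.ext h
      rw [this, hclast]
  have step : ∀ (x x' : N.Q) (a : Ltr A), (x, a, x') ∈ N.E → ∀ g,
      ExpCond w S M N φ c x g → ExpCond w S M N φ c x' (g * FreeGroup.mk [a]) := by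
    intro x x' a he g hg
    rcases (hE (x, a, x')).mp he with ⟨⟨y1, a', y2⟩, he', heq⟩ | ⟨i, hi | hi⟩
    · simp only [Prod.mk.injEq] at heq
      obtain ⟨hx, ha, hx'⟩ := heq
      subst hx; subst ha; subst hx'
      have hfst : ∀ y, φ y2 = φ y → ∀ v, M.Path y v M.q0 →
          g * FreeGroup.mk [a] * FreeGroup.mk v ∈ S := by
        intro y hy v hv
        obtain rfl := hinj hy
        have := hg.1 y1 rfl (a :: v) (.cons he' hv)
        rwa [mk_cons, ← mul_assoc] at this
      refine ⟨hfst, ?_⟩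
      intro j hj
      have hend := hcnotφ j y2 hj.symm
      refine mul_mem ?_ (inv_mem (htakeS j hend))
      have hy2 : y2 = M.q0 := hinj (by rw [hj]; exact hcq0 j hend)
      have := hfst y2 rfl [] (by rw [hy2]; exact .nil _)
      rwa [mk_nil, mul_one] at this
    · -- forward segment edge
      simp only [Prod.mk.injEq] at hi
      obtain ⟨hx, ha, hx'⟩ := hi
      subst hx; subst ha; subst hx'
      have h0 : g * (FreeGroup.mk (w.take (i : ℕ)))⁻¹ ∈ S := by
        have := hg.2 i.castSucc rfl
        rwa [Fin.coe_castSucc] at this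
      have ht : FreeGroup.mk (w.take ((i : ℕ) + 1)) =
          FreeGroup.mk (w.take (i : ℕ)) * FreeGroup.mk [w.get i] := by
        rw [FreeGroup.mul_mk, List.get_eq_getElem, List.take_concat_get']
      have gS : g * FreeGroup.mk [w.get i] *
          (FreeGroup.mk (w.take ((i : ℕ) + 1)))⁻¹ ∈ S := by
        rw [ht]
        have heq : g * FreeGroup.mk [w.get i] *
            (FreeGroup.mk (w.take (i : ℕ)) * FreeGroup.mk [w.get i])⁻¹ =
            g * (FreeGroup.mk (w.take (i : ℕ)))⁻¹ := by group
        rw [heq]; exact h0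
      have hsec : ∀ j : Fin (w.length + 1), c i.succ = c j →
          g * FreeGroup.mk [w.get i] * (FreeGroup.mk (w.take (j : ℕ)))⁻¹ ∈ S := by
        intro j hj
        have hmm := mul_mem gS (hctake i.succ j hj)
        rw [Fin.val_succ] at hmm
        have heq : g * FreeGroup.mk [w.get i] * (FreeGroup.mk (w.take (j : ℕ)))⁻¹ =
            g * FreeGroup.mk [w.get i] * (FreeGroup.mk (w.take ((i : ℕ) + 1)))⁻¹ *
              (FreeGroup.mk (w.take ((i : ℕ) + 1)) *
                (FreeGroup.mk (w.take (j : ℕ)))⁻¹) := by group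
        rw [heq]; exact hmm
      refine ⟨?_, hsec⟩
      intro y hy v hv
      have hend := hcnotφ i.succ y hy
      have hy0 : y = M.q0 := hinj (by rw [← hy]; exact hcq0 i.succ hend)
      have hgw : g * FreeGroup.mk [w.get i] ∈ S := by
        have hmm := mul_mem (hsec i.succ rfl) (htakeS i.succ hend)
        have heq : g * FreeGroup.mk [w.get i] =
            g * FreeGroup.mk [w.get i] * (FreeGroup.mk (w.take ((i.succ : Fin _) : ℕ)))⁻¹ *
              FreeGroup.mk (w.take ((i.succ : Fin _) : ℕ)) := by group
        rw [heq]; exact hmm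
      exact mul_mem hgw (hMS v (by rwa [hy0] at hv))
    · -- backward segment edge
      simp only [Prod.mk.injEq] at hi
      obtain ⟨hx, ha, hx'⟩ := hi
      subst hx; subst ha; subst hx'
      have h0 : g * (FreeGroup.mk (w.take ((i : ℕ) + 1)))⁻¹ ∈ S := by
        have := hg.2 i.succ rfl
        rwa [Fin.val_succ] at this
      have ht : FreeGroup.mk (w.take ((i : ℕ) + 1)) =
          FreeGroup.mk (w.take (i : ℕ)) * FreeGroup.mk [w.get i] := by
        rw [FreeGroup.mul_mk, List.get_eq_getElem, List.take_concat_get']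
      have gS : g * FreeGroup.mk [Ltr.inv (w.get i)] *
          (FreeGroup.mk (w.take (i : ℕ)))⁻¹ ∈ S := by
        rw [ht] at h0
        rw [mk_inv_single]
        have heq : g * (FreeGroup.mk [w.get i])⁻¹ * (FreeGroup.mk (w.take (i : ℕ)))⁻¹ =
            g * (FreeGroup.mk (w.take (i : ℕ)) * FreeGroup.mk [w.get i])⁻¹ := by group
        rw [heq]; exact h0
      have hsec : ∀ j : Fin (w.length + 1), c i.castSucc = c j →
          g * FreeGroup.mk [Ltr.inv (w.get i)] *
            (FreeGroup.mk (w.take (j : ℕ)))⁻¹ ∈ S := by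
        intro j hj
        have hmm := mul_mem gS (hctake i.castSucc j hj)
        rw [Fin.coe_castSucc] at hmm
        have heq : g * FreeGroup.mk [Ltr.inv (w.get i)] *
            (FreeGroup.mk (w.take (j : ℕ)))⁻¹ =
            g * FreeGroup.mk [Ltr.inv (w.get i)] * (FreeGroup.mk (w.take (i : ℕ)))⁻¹ *
              (FreeGroup.mk (w.take (i : ℕ)) *
                (FreeGroup.mk (w.take (j : ℕ)))⁻¹) := by group
        rw [heq]; exact hmm
      refine ⟨?_, hsec⟩
      intro y hy v hv
      have hend := hcnotφ i.castSucc y hy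
      have hy0 : y = M.q0 := hinj (by rw [← hy]; exact hcq0 i.castSucc hend)
      have hgw : g * FreeGroup.mk [Ltr.inv (w.get i)] ∈ S := by
        have hmm := mul_mem (hsec i.castSucc rfl) (htakeS i.castSucc hend)
        have heq : g * FreeGroup.mk [Ltr.inv (w.get i)] =
            g * FreeGroup.mk [Ltr.inv (w.get i)] *
              (FreeGroup.mk (w.take ((i.castSucc : Fin _) : ℕ)))⁻¹ *
              FreeGroup.mk (w.take ((i.castSucc : Fin _) : ℕ)) := by group
        rw [heq]; exact hmm
      exact mul_mem hgw (hMS v (by rwa [hy0] at hv))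
  have walk : ∀ (p : N.Q) (u : List (Ltr A)) (r : N.Q), N.Path p u r → ∀ g,
      ExpCond w S M N φ c p g → ExpCond w S M N φ c r (g * FreeGroup.mk u) := by
    intro p u r h
    induction h with
    | nil q => intro g hg; rwa [mk_nil, mul_one]
    | @cons p' q' r' a' w' he _ ih =>
        intro g hg
        have := ih (g * FreeGroup.mk [a']) (step _ _ _ he g hg)
        rwa [mk_cons, ← mul_assoc]
  have init : ExpCond w S M N φ c N.q0 1 := by
    constructor
    · intro y hy v hv
      have hy0 : y = M.q0 := hinj (by rw [← hy, hq0])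
      rw [one_mul]
      exact hMS v (by rwa [hy0] at hv)
    · intro j hj
      have hend : (j : ℕ) = 0 ∨ (j : ℕ) = w.length := by
        by_contra h
        push_neg at h
        have h0 : 0 < (j : ℕ) := Nat.pos_of_ne_zero h.1
        have hlt : (j : ℕ) < w.length := lt_of_le_of_ne (Nat.lt_succ_iff.mp j.isLt) h.2
        exact hint j h0 hlt ⟨M.q0, by rw [hq0, ← hj]⟩
      rw [one_mul]
      exact inv_mem (htakeS j hend)
  have fwd : N.langRho ⊆ ↑S := by
    rintro g ⟨u, hu, rfl⟩
    have := (walk N.q0 u N.q0 hu 1 init).1 M.q0 hq0.symm [] (.nil _)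
    rwa [mk_nil, mul_one, one_mul] at this
  have hNdual1 : ∀ p a q, (p, a, q) ∈ N.E → (q, Ltr.inv a, p) ∈ N.E := by
    intro p a q h
    rcases (hE (p, a, q)).mp h with ⟨⟨y1, a', y2⟩, he', heq⟩ | ⟨i, hi | hi⟩
    · simp only [Prod.mk.injEq] at heq
      obtain ⟨hx, ha, hx'⟩ := heq
      subst hx; subst ha; subst hx'
      exact (hE _).mpr (Or.inl ⟨(y2, Ltr.inv a, y1), (hdual _ _ _).mp he', rfl⟩)
    · simp only [Prod.mk.injEq] at hi
      obtain ⟨hx, ha, hx'⟩ := hi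
      subst hx; subst ha; subst hx'
      exact (hE _).mpr (Or.inr ⟨i, Or.inr rfl⟩)
    · simp only [Prod.mk.injEq] at hi
      obtain ⟨hx, ha, hx'⟩ := hi
      subst hx; subst ha; subst hx'
      refine (hE _).mpr (Or.inr ⟨i, Or.inl ?_⟩)
      simp [Ltr.inv]
  have hNdual : N.Dual := by
    intro p a q
    constructor
    · exact hNdual1 p a q
    · intro h
      have := hNdual1 q (Ltr.inv a) p h
      simpa [Ltr.inv] using this
  have pathmap : ∀ (p : M.Q) (u : List (Ltr A)) (q : M.Q), M.Path p u q →
      N.Path (φ p) u (φ q) := by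
    intro p u q h
    induction h with
    | nil _ => exact .nil _
    | @cons p' q' r' a' w' he _ ih =>
        exact .cons ((hE _).mpr (Or.inl ⟨(p', a', q'), he, rfl⟩)) ih
  have seg : ∀ d k (hk : k ≤ w.length), w.length - k = d →
      N.Path (c ⟨k, Nat.lt_succ_of_le hk⟩) (w.drop k) (c (Fin.last w.length)) := by
    intro d
    induction d with
    | zero =>
        intro k hk h
        have hkl : k = w.length := by omega
        subst hkl
        rw [List.drop_length]
        have he : (⟨w.length, Nat.lt_succ_of_le hk⟩ : Fin (w.length + 1)) =
            Fin.last w.length := rfl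
        rw [he]
        exact .nil _
    | succ n ih =>
        intro k hk h
        have hklt : k < w.length := by omega
        rw [List.drop_eq_getElem_cons hklt]
        refine .cons ?_ (ih (k + 1) hklt (by omega))
        refine (hE _).mpr (Or.inr ⟨⟨k, hklt⟩, Or.inl ?_⟩)
        simp only [Prod.mk.injEq]
        exact ⟨congrArg c (by ext; simp), by simp [List.get_eq_getElem],
          congrArg c (by ext; simp)⟩
  have hwlang : FreeGroup.mk w ∈ N.langRho := by
    refine ⟨w, ?_, rfl⟩
    have h0 : N.Path (c ⟨0, Nat.lt_succ_of_le (Nat.zero_le _)⟩) (w.drop 0)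
        (c (Fin.last w.length)) := seg _ 0 (Nat.zero_le _) rfl
    have e0 : (⟨0, Nat.lt_succ_of_le (Nat.zero_le _)⟩ : Fin (w.length + 1)) = 0 := rfl
    rw [e0, hc0, hq0, List.drop_zero, hclast, hq0] at h0
    exact h0
  have hone : (1 : FreeGroup A) ∈ N.langRho := ⟨[], .nil _, rfl⟩
  have hmul : ∀ g1 g2 : FreeGroup A, g1 ∈ N.langRho → g2 ∈ N.langRho →
      g1 * g2 ∈ N.langRho := by
    rintro _ _ ⟨u, hu, rfl⟩ ⟨v, hv, rfl⟩
    exact ⟨u ++ v, hu.append'' hv, (FreeGroup.mul_mk).symm⟩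
  have hinvm : ∀ g : FreeGroup A, g ∈ N.langRho → g⁻¹ ∈ N.langRho := by
    rintro _ ⟨u, hu, rfl⟩
    exact ⟨wordInv u, hu.dualRev hNdual, mk_wordInv u⟩
  have bwd : (↑S : Set (FreeGroup A)) ⊆ N.langRho := by
    intro g hg
    refine Subgroup.closure_induction ?_ hone (fun x y _ _ hx hy => hmul x y hx hy) (fun x _ hx => hinvm x hx) hg
    rintro x (⟨v, hv, rfl⟩ | hx)
    · have := pathmap M.q0 v M.q0 hv
      rw [hq0] at this
      exact ⟨v, this, rfl⟩
    · rw [Set.mem_singleton_iff.mp hx]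
      exact hwlang
  exact Set.Subset.antisymm fwd bwd
end

section
/- Let 𝒜 be a dual automaton over Ã which is not deterministic, with transitions (r,a,p) and (r,a,q), p ≠ q, and let 𝓑 be obtained from 𝒜 by identifying the states p and q (an elementary reduction of type 1). Then L(𝒜)ρ = L(𝓑)ρ. -/
open Function

theorem Autom.Path_append {A : Type} {M : Autom A} {x y z : M.Q} {w u : List (Ltr A)}
    (h1 : M.Path x w y) (h2 : M.Path y u z) : M.Path x (w ++ u) z := by
  induction h1 with
  | nil => simpa
  | cons he _ ih => exact .cons he (ih h2)

theorem mk_invcons {A : Type} (a : Ltr A) :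
    FreeGroup.mk [Ltr.inv a, a] = (1 : FreeGroup A) := by
  have h := Quot.sound (@FreeGroup.Red.Step.not A [] [] a.1 (!a.2))
  simp only [FreeGroup.quot_mk_eq_mk] at h
  simp only [List.nil_append, Bool.not_not] at h
  rw [FreeGroup.one_eq_mk, ← h]
  rfl

/-- Fact 1.4: an elementary reduction of type 1 does not change `L(·)ρ`. -/
theorem red1_langRho_eq
    {A : Type} (M : Autom A) (hdual : M.Dual)
    (r : M.Q) (a : Ltr A) (p q : M.Q)
    (hp : (r, a, p) ∈ M.E) (hq : (r, a, q) ∈ M.E) (hpq : p ≠ q)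
    (N : Autom A) (hN : M.IsIdentification p q N) :
    M.langRho = N.langRho := by
  obtain ⟨φ, hsurj, hq0, hfib, hedge⟩ := hN
  have hpinv : (p, Ltr.inv a, r) ∈ M.E := (hdual r a p).1 hp
  have hqinv : (q, Ltr.inv a, r) ∈ M.E := (hdual r a q).1 hq
  have bridge : ∀ x y : M.Q, φ x = φ y →
      ∃ w, M.Path x w y ∧ FreeGroup.mk w = 1 := by
    intro x y hxy
    rcases (hfib x y).1 hxy with rfl | ⟨rfl, rfl⟩ | ⟨rfl, rfl⟩
    · exact ⟨[], .nil _, FreeGroup.one_eq_mk.symm⟩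
    · exact ⟨[Ltr.inv a, a], .cons hpinv (.cons hq (.nil _)), mk_invcons a⟩
    · exact ⟨[Ltr.inv a, a], .cons hqinv (.cons hp (.nil _)), mk_invcons a⟩
  have lift : ∀ {x w y}, N.Path x w y → ∀ x', φ x' = x →
      ∃ w' y', φ y' = y ∧ M.Path x' w' y' ∧ FreeGroup.mk w' = FreeGroup.mk w := by
    intro x w y h
    induction h with
    | nil z => exact fun x' hx' => ⟨[], x', hx', .nil _, rfl⟩
    | @cons x z y b w he _ ih =>
      intro x' hx'
      obtain ⟨e', he', heq⟩ := (hedge _).1 he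
      obtain ⟨m1, b', m2⟩ := e'
      simp only [Prod.mk.injEq] at heq
      obtain ⟨h1, h2, h3⟩ := heq
      subst h2
      obtain ⟨u, hu, hu1⟩ := bridge x' m1 (hx'.trans h1)
      obtain ⟨w', y', hy', hpath, hmk⟩ := ih m2 h3.symm
      refine ⟨u ++ b :: w', y', hy', Autom.Path_append hu (.cons he' hpath), ?_⟩
      have : FreeGroup.mk (u ++ b :: w') = FreeGroup.mk u * (FreeGroup.mk [b] * FreeGroup.mk w') := by
        rw [FreeGroup.mul_mk, FreeGroup.mul_mk]; rfl
      rw [this, hu1, one_mul, hmk, FreeGroup.mul_mk]; rfl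
  ext g
  simp only [Autom.langRho, Set.mem_image, Autom.lang, Set.mem_setOf_eq]
  constructor
  · rintro ⟨w, hw, rfl⟩
    refine ⟨w, ?_, rfl⟩
    have : ∀ {x u y}, M.Path x u y → N.Path (φ x) u (φ y) := by
      intro x u y h
      induction h with
      | nil => exact .nil _
      | cons he _ ih => exact .cons ((hedge _).2 ⟨_, he, rfl⟩) ih
    have := this hw
    rwa [hq0] at this
  · rintro ⟨w, hw, rfl⟩
    obtain ⟨w', y', hy', hpath, hmk⟩ := lift hw M.q0 hq0
    obtain ⟨v, hv, hv1⟩ := bridge y' M.q0 (hy'.trans hq0.symm)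
    refine ⟨w' ++ v, Autom.Path_append hpath hv, ?_⟩
    rw [← FreeGroup.mul_mk, hmk, hv1, mul_one]
end

section
/- Let 𝒜 = (Q, q₀, E) be a reduced inverse automaton over Ã, let H = L(𝒜)ρ, and let T be a spanning tree of 𝒜. For each state p let u_p be the reduced word labeling the path from q₀ to p inside T, and for each transition e = (p,a,q) let b_e = (u_p a u_q⁻¹)ρ ∈ F(A). Then H is a free group with basis {b_e : e = (p,a,q) ∈ E ∖ T with a ∈ A}; in particular, the rank of H equals e − v + 1, where e is the number of transitions (p,a,q) of 𝒜 with a ∈ A and v = |Q|. -/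
open Function

/-!
Read a loop at `q₀` edge by edge: since `u_{q₀}` is empty, its label equals the telescoping
product of the elements `b_e = u_p a u_q⁻¹` of its edges `e = (p, a, q)`. Tree edges give
`b_e = 1` (tree labels are unique among reduced words) and `b_{e⁻¹} = b_e⁻¹`, so the `b_e` with
`e ∉ T` positive generate `H`. They generate it freely: `u_p a u_q⁻¹` is reduced, and in a
product `b_{e₁} b_{e₂}` with `e₂ ≠ e₁⁻¹` the cancellation between `u_{q₁}⁻¹` and `u_{p₂}` stops
where the tree paths to `q₁` and `p₂` part, before reaching `a₁` or `a₂`, since the automaton is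
deterministic and `e₁, e₂ ∉ T`. By induction the reduced form of a nontrivial reduced product
of the `b_e^{±1}` ends with `a u_q⁻¹` for its last factor, so it is not `1`. The rank formula
counts positive transitions: `v - 1` of them lie in the tree.
-/

open FreeGroup

section Words
variable {α : Type}

@[simp] lemma Ltr.inv_inv (x : Ltr α) : x.inv.inv = x := by
  simp [Ltr.inv]

lemma Ltr.ne_inv_iff {x y : Ltr α} : y ≠ Ltr.inv x ↔ (x.1 = y.1 → x.2 = y.2) := by
  obtain ⟨a, b⟩ := x
  obtain ⟨c, d⟩ := y
  cases b <;> cases d <;> simp [Ltr.inv, eq_comm]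

lemma isReducedWord_iff_isReduced {w : List (Ltr α)} : IsReducedWord w ↔ IsReduced w := by
  rw [isReduced_iff_not_step]
  constructor
  · rintro h _ ⟨⟩
    exact h _ _ _ _ rfl
  · rintro h u v a b rfl
    exact h _ Red.Step.not

lemma FreeGroup.IsReduced.invRev {L : List (α × Bool)} (h : IsReduced L) :
    IsReduced (invRev L) := by
  simp only [FreeGroup.IsReduced, FreeGroup.invRev, List.isChain_reverse,
    List.isChain_map] at h ⊢
  exact h.imp fun a b hab hba => by simpa using (hab hba.symm).symm

lemma FreeGroup.IsReduced.append_of_ne_inv {L₁ L₂ : List (Ltr α)} (h₁ : IsReduced L₁)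
    (h₂ : IsReduced L₂) (h : ∀ x ∈ L₁.getLast?, ∀ y ∈ L₂.head?, y ≠ Ltr.inv x) :
    IsReduced (L₁ ++ L₂) :=
  List.IsChain.append h₁ h₂ fun x hx y hy => Ltr.ne_inv_iff.mp (h x hx y hy)

lemma List.exists_common_prefix {β : Type} (x y : List β) :
    ∃ c s t, x = c ++ s ∧ y = c ++ t ∧ ∀ a ∈ s.head?, ∀ b ∈ t.head?, a ≠ b := by
  induction x generalizing y with
  | nil => exact ⟨[], [], y, rfl, rfl, by simp⟩
  | cons a x ih =>
    cases y with
    | nil => exact ⟨[], a :: x, [], rfl, rfl, by simp⟩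
    | cons b y =>
      by_cases hab : a = b
      · obtain ⟨c, s, t, rfl, rfl, hst⟩ := ih y
        exact ⟨a :: c, s, t, rfl, by rw [hab]; rfl, hst⟩
      · exact ⟨[], a :: x, b :: y, rfl, rfl, by simpa using hab⟩

lemma List.eq_of_append_cons_eq {β : Type} {x y s t : List β} {a b : β}
    (h : x ++ a :: s = y ++ b :: t) (hx : ¬ x ++ [a] <+: y) (hy : ¬ y ++ [b] <+: x) :
    x = y := by
  obtain ⟨_ | ⟨c, z⟩, rfl, h'⟩ | ⟨_ | ⟨c, z⟩, rfl, h'⟩ := List.append_eq_append_iff.mp h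
  · simp
  · obtain ⟨rfl, -⟩ := List.cons.inj h'
    exact absurd ⟨z, by simp⟩ hx
  · simp
  · obtain ⟨rfl, -⟩ := List.cons.inj h'
    exact absurd ⟨z, by simp⟩ hy

end Words

lemma FreeGroup.injective_lift_val_image {ι G : Type} [Group G] {s : Set ι} {f : ι → G}
    (hf : s.InjOn f) (h : Injective (FreeGroup.lift fun i : s => f i)) :
    Injective (FreeGroup.lift (Subtype.val : f '' s → G)) := by
  let e : s ≃ f '' s := Equiv.Set.imageOfInjOn f s hf
  have : FreeGroup.lift (Subtype.val : f '' s → G) =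
      (FreeGroup.lift fun i : s => f i).comp (freeGroupCongr e.symm).toMonoidHom := by
    ext y
    simp only [lift_apply_of, MonoidHom.coe_comp, MulEquiv.coe_toMonoidHom, comp_apply,
      freeGroupCongr_apply, map.of]
    exact congrArg Subtype.val (e.apply_symm_apply y).symm
  rw [this]
  exact h.comp (freeGroupCongr e.symm).injective

namespace Autom

section Paths
variable {A : Type} {M : Autom A} {S : Set (M.Q × Ltr A × M.Q)} {p q r : M.Q}
  {a : Ltr A} {w w' x y : List (Ltr A)}

@[simp] lemma pathOn_nil_iff : M.PathOn S p [] q ↔ p = q :=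
  ⟨fun h => by cases h; rfl, fun h => h ▸ .nil p⟩

@[simp] lemma pathOn_cons_iff :
    M.PathOn S p (a :: w) r ↔ ∃ q, (p, a, q) ∈ S ∧ M.PathOn S q w r :=
  ⟨fun h => by cases h with | cons he h => exact ⟨_, he, h⟩, fun ⟨_, he, h⟩ => .cons he h⟩

lemma pathOn_append_iff :
    M.PathOn S p (x ++ y) r ↔ ∃ q, M.PathOn S p x q ∧ M.PathOn S q y r := by
  induction x generalizing p with
  | nil => simp
  | cons b x ih => simp only [List.cons_append, pathOn_cons_iff, ih]; grind

lemma PathOn.append (h₁ : M.PathOn S p x q) (h₂ : M.PathOn S q y r) :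
    M.PathOn S p (x ++ y) r :=
  pathOn_append_iff.mpr ⟨q, h₁, h₂⟩

lemma PathOn.mono {S' : Set (M.Q × Ltr A × M.Q)} (h : M.PathOn S p w q) (hS : S ⊆ S') :
    M.PathOn S' p w q := by
  induction h with
  | nil => exact .nil _
  | cons he _ ih => exact .cons (hS he) ih

lemma PathOn.invRev (hS : ∀ p a q, (p, a, q) ∈ S → (q, Ltr.inv a, p) ∈ S)
    (h : M.PathOn S p w q) : M.PathOn S q (invRev w) p := by
  induction h with
  | nil => exact .nil _
  | cons he _ ih => exact invRev_cons ▸ ih.append (.cons (hS _ _ _ he) (.nil _))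

lemma PathOn.target_eq (hdet : M.Deterministic) (hS : S ⊆ M.E) {q' : M.Q}
    (h : M.PathOn S p w q) (h' : M.PathOn S p w q') : q = q' := by
  induction h with
  | nil => exact pathOn_nil_iff.mp h'
  | cons he _ ih =>
    obtain ⟨_, he', h'⟩ := pathOn_cons_iff.mp h'
    exact ih (hdet _ _ _ _ (hS he') (hS he) ▸ h')

lemma PathOn.red (hdet : M.Deterministic) (hS : S ⊆ M.E)
    (hinv : ∀ p a q, (p, a, q) ∈ S → (q, Ltr.inv a, p) ∈ S)
    (h : M.PathOn S p w q) (hr : Red w w') : M.PathOn S p w' q := by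
  induction hr with
  | refl => exact h
  | tail _ hstep ih =>
    cases hstep with
    | @not L₁ L₂ c b =>
      obtain ⟨r, h₁, h₂⟩ := pathOn_append_iff.mp ih
      obtain ⟨s, hrs, t, hst, h₃⟩ : ∃ s, (r, (c, b), s) ∈ S ∧ ∃ t, (s, (c, !b), t) ∈ S ∧
          M.PathOn S t L₂ q := by simpa using h₂
      obtain rfl : t = r := hdet _ _ _ _ (hS hst) (hS (hinv _ _ _ hrs))
      exact h₁.append h₃

end Paths

section SpanningTrees
variable {A : Type} {M : Autom A} {T : Set (M.Q × Ltr A × M.Q)} {p q r : M.Q}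
  {a : Ltr A} {w w' : List (Ltr A)}

structure IsDualSubset (M : Autom A) (T : Set (M.Q × Ltr A × M.Q)) : Prop where
  subset : T ⊆ M.E
  inv_mem : ∀ p a q, (p, a, q) ∈ T → (q, Ltr.inv a, p) ∈ T

def underlyingGraph (T : Set (M.Q × Ltr A × M.Q)) : SimpleGraph M.Q :=
  SimpleGraph.fromRel fun x y => ∃ a, (x, a, y) ∈ T

structure IsSpanningTree (M : Autom A) (T : Set (M.Q × Ltr A × M.Q)) : Prop
    extends M.IsDualSubset T where
  label_unique : ∀ p q a b, (p, a, q) ∈ T → (p, b, q) ∈ T → a = b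
  isTree : (underlyingGraph T).IsTree

lemma IsSpanningTree.adj (hT : M.IsSpanningTree T) (he : (p, a, q) ∈ T) :
    (underlyingGraph T).Adj p q := by
  refine SimpleGraph.fromRel_adj _ _ _ |>.mpr ⟨?_, .inl ⟨a, he⟩⟩
  rintro rfl
  simpa [Ltr.inv] using congrArg Prod.snd (hT.label_unique _ _ _ _ he (hT.inv_mem _ _ _ he))

/-- A `T`-path with reduced label never backtracks, so it traces a path of the tree. -/
lemma IsSpanningTree.exists_isPath (hT : M.IsSpanningTree T) (hdet : M.Deterministic)
    (h : M.PathOn T p w q) (hw : IsReduced w) :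
    ∃ wk : (underlyingGraph T).Walk p q, wk.IsPath ∧
      ∀ a w₁ r, w = a :: w₁ → (p, a, r) ∈ T → wk.snd = r := by
  induction h with
  | nil q => exact ⟨.nil, .nil, by simp⟩
  | @cons p r q b w₁ hpr hrq ih =>
    obtain ⟨wk, hwk, hsnd⟩ := ih (hw.infix ⟨[b], [], by simp⟩)
    have hadj := hT.adj hpr
    have hp : p ∉ wk.support := by
      intro hp
      have hps : p = wk.snd := hT.isTree.isAcyclic.eq_snd_of_adj_start hwk hadj.symm hp
      cases hrq with
      | nil =>
        obtain rfl := SimpleGraph.Walk.eq_nil_iff_nil.mpr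
          (SimpleGraph.Walk.isPath_iff_nil.mp hwk)
        exact hadj.ne (by simpa using hp)
      | @cons _ s _ c w₂ hrs _ =>
        obtain rfl : s = p := (hsnd _ _ _ rfl hrs).symm.trans hps.symm
        have hc : c = Ltr.inv b := hT.label_unique _ _ _ _ hrs (hT.inv_mem _ _ _ hpr)
        simp [hc, Ltr.inv] at hw
    refine ⟨.cons hadj wk, hwk.cons hp, ?_⟩
    rintro a w₂ r' ⟨⟩ hr'
    simpa using hdet _ _ _ _ (hT.subset hpr) (hT.subset hr')

lemma IsSpanningTree.eq_nil_of_pathOn (hT : M.IsSpanningTree T) (hdet : M.Deterministic)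
    (h : M.PathOn T p w p) (hw : IsReduced w) : w = [] := by
  obtain ⟨wk, hwk, hsnd⟩ := hT.exists_isPath hdet h hw
  obtain rfl := SimpleGraph.Walk.eq_nil_iff_nil.mpr (SimpleGraph.Walk.isPath_iff_nil.mp hwk)
  cases h with
  | nil => rfl
  | cons hpr _ => exact absurd (hsnd _ _ _ rfl hpr) (hT.adj hpr).ne

lemma IsSpanningTree.eq_of_pathOn (hT : M.IsSpanningTree T) (hdet : M.Deterministic)
    (h : M.PathOn T p w q) (h' : M.PathOn T p w' q) (hw : IsReduced w) (hw' : IsReduced w') :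
    w = w' := by
  induction h generalizing w' with
  | nil => exact (hT.eq_nil_of_pathOn hdet h' hw').symm
  | @cons p r q b w₁ hpr hrq ih =>
    cases h' with
    | nil => exact hT.eq_nil_of_pathOn hdet (.cons hpr hrq) hw
    | @cons _ r' _ b' w₁' hpr' hrq' =>
      obtain ⟨wk, hwk, hsnd⟩ := hT.exists_isPath hdet (.cons hpr hrq) hw
      obtain ⟨wk', hwk', hsnd'⟩ := hT.exists_isPath hdet (.cons hpr' hrq') hw'
      obtain rfl : wk = wk' := hT.isTree.existsUnique_path p q |>.unique hwk hwk'
      obtain rfl : r = r' := (hsnd _ _ _ rfl hpr).symm.trans (hsnd' _ _ _ rfl hpr')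
      obtain rfl := hT.label_unique _ _ _ _ hpr hpr'
      rw [ih hrq' (hw.infix ⟨[b], [], by simp⟩) (hw'.infix ⟨[b], [], by simp⟩)]

lemma IsSpanningTree.ncard_add_one [Finite M.Q] (hT : M.IsSpanningTree T) :
    {e ∈ T | e.2.1.2 = true}.ncard + 1 = Nat.card M.Q := by
  classical
  have : Fintype M.Q := Fintype.ofFinite _
  let ends : M.Q × Ltr A × M.Q → Sym2 M.Q := fun e => s(e.1, e.2.2)
  have hinj : Set.InjOn ends {e ∈ T | e.2.1.2 = true} := by
    rintro ⟨p, a, q⟩ ⟨he, ha⟩ ⟨p', a', q'⟩ ⟨he', ha'⟩ h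
    obtain ⟨rfl, rfl⟩ | ⟨rfl, rfl⟩ := Sym2.eq_iff.mp h
    · rw [hT.label_unique _ _ _ _ he he']
    · have := hT.label_unique _ _ _ _ he (hT.inv_mem _ _ _ he')
      simp_all [Ltr.inv]
  have hmem : ∀ p a q, (p, a, q) ∈ T → s(p, q) ∈ ends '' {e ∈ T | e.2.1.2 = true} := by
    intro p a q h
    cases ha : a.2
    · exact ⟨(q, Ltr.inv a, p), ⟨hT.inv_mem _ _ _ h, by simp [Ltr.inv, ha]⟩, Sym2.eq_swap⟩
    · exact ⟨(p, a, q), ⟨h, ha⟩, rfl⟩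
  have himg : ends '' {e ∈ T | e.2.1.2 = true} = (underlyingGraph T).edgeSet := by
    refine Set.Subset.antisymm (by rintro _ ⟨e, ⟨he, -⟩, rfl⟩; exact hT.adj he) fun z hz => ?_
    induction z using Sym2.ind with
    | _ p q =>
      obtain ⟨-, ⟨a, h⟩ | ⟨a, h⟩⟩ :=
        (SimpleGraph.fromRel_adj (fun x y => ∃ a, (x, a, y) ∈ T) p q).mp hz
      · exact hmem _ _ _ h
      · exact Sym2.eq_swap (a := q) ▸ hmem _ _ _ h
  rw [← hinj.ncard_image, himg, Set.ncard_eq_toFinset_card', Nat.card_eq_fintype_card,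
    ← hT.isTree.card_edgeFinset]
  rfl

end SpanningTrees

section EdgeWords
variable {A : Type} {M : Autom A} {T : Set (M.Q × Ltr A × M.Q)} {u : M.Q → List (Ltr A)}
  {p q : M.Q} {m : Ltr A}

structure IsTreeWords (M : Autom A) (T : Set (M.Q × Ltr A × M.Q))
    (u : M.Q → List (Ltr A)) : Prop where
  isReduced : ∀ p, IsReduced (u p)
  pathOn : ∀ p, M.PathOn T M.q0 (u p) p

def edgeRev {Q : Type} (e : Q × Ltr A × Q) : Q × Ltr A × Q := (e.2.2, Ltr.inv e.2.1, e.1)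

def edgeWord {Q : Type} (u : Q → List (Ltr A)) (e : Q × Ltr A × Q) : List (Ltr A) :=
  u e.1 ++ e.2.1 :: invRev (u e.2.2)

@[simp] lemma edgeRev_edgeRev {Q : Type} (e : Q × Ltr A × Q) : edgeRev (edgeRev e) = e := by
  simp [edgeRev]

lemma IsDualSubset.edgeRev_mem (hdual : M.Dual) (hT : M.IsDualSubset T)
    {e : M.Q × Ltr A × M.Q} (he : e ∈ M.E \ T) : edgeRev e ∈ M.E \ T :=
  ⟨(hdual _ _ _).mp he.1, fun h => he.2 (by simpa [edgeRev] using hT.inv_mem _ _ _ h)⟩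

lemma mk_edgeWord {Q : Type} (u : Q → List (Ltr A)) (e : Q × Ltr A × Q) :
    FreeGroup.mk (edgeWord u e) =
      FreeGroup.mk (u e.1) * FreeGroup.mk [e.2.1] * (FreeGroup.mk (u e.2.2))⁻¹ := by
  rw [edgeWord, inv_mk, mul_mk, mul_mk, List.append_assoc, List.singleton_append]

lemma mk_edgeWord_edgeRev {Q : Type} (u : Q → List (Ltr A)) (e : Q × Ltr A × Q) :
    FreeGroup.mk (edgeWord u (edgeRev e)) = (FreeGroup.mk (edgeWord u e))⁻¹ := by
  rw [inv_mk, edgeWord, edgeWord, invRev_append, invRev_cons, invRev_invRev, List.append_assoc]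
  rfl

lemma IsTreeWords.eq_nil (hT : M.IsSpanningTree T) (hdet : M.Deterministic)
    (hu : M.IsTreeWords T u) : u M.q0 = [] :=
  hT.eq_nil_of_pathOn hdet (hu.pathOn M.q0) (hu.isReduced M.q0)

lemma IsTreeWords.mk_edgeWord_of_mem (hT : M.IsSpanningTree T)
    (hdet : M.Deterministic) (hu : M.IsTreeWords T u) {e : M.Q × Ltr A × M.Q} (he : e ∈ T) :
    FreeGroup.mk (edgeWord u e) = 1 := by
  classical
  obtain ⟨p, m, q⟩ := e
  have hpath := ((hu.pathOn p).append (.cons he (.nil q))).red hdet hT.subset hT.inv_mem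
    reduce.red
  have hq : reduce (u p ++ [m]) = u q :=
    hT.eq_of_pathOn hdet hpath (hu.pathOn q) (.of_reduce_eq reduce.idem) (hu.isReduced q)
  have hmk : FreeGroup.mk (u p ++ [m]) = FreeGroup.mk (u q) := by rw [← hq, reduce.self]
  rw [edgeWord, ← List.singleton_append, ← List.append_assoc, ← mul_mk, hmk, ← inv_mk,
    mul_inv_cancel]

lemma IsTreeWords.path_edgeWord (hT : M.IsDualSubset T) (hu : M.IsTreeWords T u)
    {e : M.Q × Ltr A × M.Q} (he : e ∈ M.E) : M.Path M.q0 (edgeWord u e) M.q0 :=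
  ((hu.pathOn e.1).mono hT.subset).append
    (.cons he (((hu.pathOn e.2.2).invRev hT.inv_mem).mono hT.subset))

lemma IsTreeWords.not_prefix (hdet : M.Deterministic) (hT : M.IsDualSubset T)
    (hu : M.IsTreeWords T u) (he : (p, m, q) ∈ M.E) (heT : (p, m, q) ∉ T) (p' : M.Q) :
    ¬ u p ++ [m] <+: u p' := by
  rintro ⟨z, hz⟩
  obtain ⟨r, hr, s, hrs, -⟩ : ∃ r, M.PathOn T M.q0 (u p) r ∧ ∃ s, (r, m, s) ∈ T ∧
      M.PathOn T s z p' := by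
    simpa [← hz, pathOn_append_iff] using hu.pathOn p'
  obtain rfl := hr.target_eq hdet hT.subset (hu.pathOn p)
  obtain rfl := hdet _ _ _ _ he (hT.subset hrs)
  exact heT hrs

lemma IsTreeWords.ne_inv_getLast (hdet : M.Deterministic) (hT : M.IsDualSubset T)
    (hu : M.IsTreeWords T u) (he : (p, m, q) ∈ M.E) (heT : (p, m, q) ∉ T) :
    ∀ x ∈ (u p).getLast?, m ≠ Ltr.inv x := by
  rintro x hx rfl
  obtain ⟨z, hz⟩ := List.getLast?_eq_some_iff.mp hx
  obtain ⟨r, -, hrp⟩ : ∃ r, M.PathOn T M.q0 z r ∧ (r, x, p) ∈ T := by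
    simpa [hz, pathOn_append_iff] using hu.pathOn p
  have hpr : (p, Ltr.inv x, r) ∈ T := hT.inv_mem _ _ _ hrp
  obtain rfl := hdet _ _ _ _ he (hT.subset hpr)
  exact heT hpr

lemma IsTreeWords.isReduced_edgeWord (hdet : M.Deterministic) (hdual : M.Dual)
    (hT : M.IsDualSubset T) (hu : M.IsTreeWords T u) {e : M.Q × Ltr A × M.Q} (he : e ∈ M.E \ T) :
    IsReduced (edgeWord u e) := by
  obtain ⟨p, m, q⟩ := e
  have hq := hu.ne_inv_getLast hdet hT (hT.edgeRev_mem hdual he).1 (hT.edgeRev_mem hdual he).2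
  refine (hu.isReduced p).append_of_ne_inv ?_
    (by simpa using hu.ne_inv_getLast hdet hT he.1 he.2)
  refine (List.singleton_append (l := invRev (u q))).symm ▸
    IsReduced.singleton.append_of_ne_inv (hu.isReduced q).invRev ?_
  simp only [List.getLast?_singleton, Option.mem_def, Option.some.injEq, invRev,
    List.head?_reverse, List.getLast?_map, Option.map_eq_some_iff, forall_eq']
  rintro _ ⟨x, hx, rfl⟩ h
  exact hq x hx h.symm

lemma IsTreeWords.injOn_edgeWord (hdet : M.Deterministic) (hT : M.IsDualSubset T)
    (hu : M.IsTreeWords T u) : Set.InjOn (edgeWord u) (M.E \ T) := by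
  rintro ⟨p, m, q⟩ ⟨he, heT⟩ ⟨p', m', q'⟩ ⟨he', heT'⟩ h
  have hp : u p = u p' := List.eq_of_append_cons_eq h (hu.not_prefix hdet hT he heT p')
    (hu.not_prefix hdet hT he' heT' p)
  simp only [edgeWord, hp] at h
  obtain ⟨rfl, hq⟩ := List.cons.inj (List.append_cancel_left h)
  obtain rfl := (hu.pathOn p).target_eq hdet hT.subset (hp ▸ hu.pathOn p')
  obtain rfl := (hu.pathOn q).target_eq hdet hT.subset (invRev_injective hq ▸ hu.pathOn q')
  rfl

lemma IsTreeWords.injOn_mk_edgeWord (hdet : M.Deterministic) (hdual : M.Dual)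
    (hT : M.IsDualSubset T) (hu : M.IsTreeWords T u) :
    Set.InjOn (fun e => FreeGroup.mk (edgeWord u e)) (M.E \ T) := by
  classical
  intro e he e' he' h
  have := congrArg FreeGroup.toWord h
  simp only [toWord_mk, (hu.isReduced_edgeWord hdet hdual hT he).reduce_eq,
    (hu.isReduced_edgeWord hdet hdual hT he').reduce_eq] at this
  exact hu.injOn_edgeWord hdet hT he he' this

end EdgeWords

section Freeness
variable {A : Type} {M : Autom A} {T : Set (M.Q × Ltr A × M.Q)} {u : M.Q → List (Ltr A)}

/-- `r` is where the tree paths to `q₁` and `p₂` part; the two letters of `b_{d₁} b_{d₂}` that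
meet at `r` do not cancel. -/
lemma ne_inv_of_branch (hdet : M.Deterministic) (hdual : M.Dual) (hT : M.IsDualSubset T)
    {r p₁ q₁ p₂ q₂ : M.Q} {m₁ m₂ : Ltr A} {s t : List (Ltr A)}
    (hsr : M.PathOn T r s q₁) (htr : M.PathOn T r t p₂)
    (hst : ∀ a ∈ s.head?, ∀ b ∈ t.head?, a ≠ b) (hd₁ : (p₁, m₁, q₁) ∈ M.E \ T)
    (hd₂ : (p₂, m₂, q₂) ∈ M.E \ T) (hne : (p₂, m₂, q₂) ≠ edgeRev (p₁, m₁, q₁)) :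
    ∀ x ∈ (m₁ :: invRev s).getLast?, ∀ y ∈ (t ++ [m₂]).head?, y ≠ Ltr.inv x := by
  obtain ⟨he₁, heT₁⟩ := hd₁
  obtain ⟨he₂, heT₂⟩ := hd₂
  rcases s with _ | ⟨z, s⟩
  · obtain rfl : r = q₁ := by simpa using hsr
    rcases t with _ | ⟨y, t⟩
    · obtain rfl : r = p₂ := by simpa using htr
      rintro _ ⟨⟩ _ ⟨⟩ rfl
      exact hne (by rw [hdet _ _ _ _ he₂ ((hdual _ _ _).mp he₁)]; rfl)
    · rintro _ ⟨⟩ _ ⟨⟩ rfl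
      obtain ⟨z, hrz, -⟩ := pathOn_cons_iff.mp htr
      obtain rfl := hdet _ _ _ _ (hT.subset hrz) ((hdual _ _ _).mp he₁)
      exact heT₁ (by simpa using hT.inv_mem _ _ _ hrz)
  · have hlast : (m₁ :: invRev (z :: s)).getLast? = some (Ltr.inv z) := by
      rw [invRev_cons, ← List.cons_append]
      exact List.getLast?_concat
    rw [hlast]
    rcases t with _ | ⟨y, t⟩
    · obtain rfl : r = p₂ := by simpa using htr
      rintro _ ⟨⟩ _ ⟨⟩ h
      obtain ⟨w, hrw, -⟩ := pathOn_cons_iff.mp hsr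
      obtain rfl := hdet _ _ _ _ (hT.subset hrw) (by simpa [h] using he₂)
      exact heT₂ (by simpa [h] using hrw)
    · rintro _ ⟨⟩ _ ⟨⟩ h
      exact hst _ rfl _ rfl (by simpa using h.symm)

lemma IsTreeWords.suffix_toWord_mul [DecidableEq A] (hdet : M.Deterministic) (hdual : M.Dual)
    (hT : M.IsDualSubset T) (hu : M.IsTreeWords T u) {d₁ d₂ : M.Q × Ltr A × M.Q}
    (hd₁ : d₁ ∈ M.E \ T) (hd₂ : d₂ ∈ M.E \ T) (hne : d₂ ≠ edgeRev d₁) {x : FreeGroup A}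
    (hx : d₁.2.1 :: invRev (u d₁.2.2) <:+ x.toWord) :
    d₂.2.1 :: invRev (u d₂.2.2) <:+ (x * FreeGroup.mk (edgeWord u d₂)).toWord := by
  obtain ⟨p₁, m₁, q₁⟩ := d₁
  obtain ⟨p₂, m₂, q₂⟩ := d₂
  obtain ⟨v, hv⟩ := hx
  obtain ⟨c, s, t, hs, ht, hst⟩ := List.exists_common_prefix (u q₁) (u p₂)
  obtain ⟨r, hc, hsr⟩ := pathOn_append_iff.mp (hs ▸ hu.pathOn q₁)
  obtain ⟨r', hc', htr⟩ := pathOn_append_iff.mp (ht ▸ hu.pathOn p₂)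
  obtain rfl := hc.target_eq hdet hT.subset hc'
  have hleft : IsReduced (v ++ m₁ :: invRev s) := by
    have := x.isReduced_toWord
    rw [← hv, hs, invRev_append] at this
    exact this.infix ⟨[], invRev c, by simp⟩
  have hright : IsReduced (t ++ m₂ :: invRev (u q₂)) :=
    (hu.isReduced_edgeWord hdet hdual hT hd₂).infix ⟨c, [], by simp [edgeWord, ht]⟩
  have hW : IsReduced ((v ++ m₁ :: invRev s) ++ (t ++ m₂ :: invRev (u q₂))) := by
    refine hleft.append_of_ne_inv hright fun x hx y hy => ?_
    refine ne_inv_of_branch hdet hdual hT hsr htr hst hd₁ hd₂ hne x ?_ y (by simpa using hy)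
    rwa [List.getLast?_append_of_ne_nil _ (List.cons_ne_nil _ _)] at hx
  have hmk : x * FreeGroup.mk (edgeWord u (p₂, m₂, q₂)) =
      FreeGroup.mk ((v ++ m₁ :: invRev s) ++ (t ++ m₂ :: invRev (u q₂))) := by
    have hcancel : ∀ X Y : List (Ltr A),
        FreeGroup.mk (X ++ (invRev c ++ c) ++ Y) = FreeGroup.mk (X ++ Y) := by
      intro X Y
      rw [← mul_mk, ← mul_mk, ← mul_mk, ← inv_mk, inv_mul_cancel, mul_one, mul_mk]
    rw [← hcancel, ← mk_toWord (x := x), ← hv, mul_mk, hs, invRev_append]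
    simp [edgeWord, ht]
  refine ⟨v ++ m₁ :: invRev s ++ t, ?_⟩
  rw [hmk, toWord_mk, hW.reduce_eq]
  simp

lemma IsTreeWords.suffix_toWord_mul_prod [DecidableEq A] (hdet : M.Deterministic)
    (hdual : M.Dual) (hT : M.IsDualSubset T) (hu : M.IsTreeWords T u) :
    ∀ (ds : List (M.Q × Ltr A × M.Q)) {d : M.Q × Ltr A × M.Q} {x : FreeGroup A},
      (∀ d' ∈ d :: ds, d' ∈ M.E \ T) → (d :: ds).IsChain (fun d d' => d' ≠ edgeRev d) →
      d.2.1 :: invRev (u d.2.2) <:+ x.toWord →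
      ((d :: ds).getLast (List.cons_ne_nil _ _)).2.1 ::
          invRev (u ((d :: ds).getLast (List.cons_ne_nil _ _)).2.2) <:+
        (x * (ds.map fun d => FreeGroup.mk (edgeWord u d)).prod).toWord
  | [], _, _, _, _, hx => by simpa using hx
  | d' :: ds, d, x, hds, hchain, hx => by
    rw [List.getLast_cons (List.cons_ne_nil _ _), List.map_cons, List.prod_cons, ← mul_assoc]
    obtain ⟨hne, hchain⟩ := List.isChain_cons_cons.mp hchain
    exact suffix_toWord_mul_prod hdet hdual hT hu ds (fun e he => hds e (.tail _ he)) hchain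
      (hu.suffix_toWord_mul hdet hdual hT (hds d (.head _)) (hds d' (.tail _ (.head _))) hne hx)

lemma IsTreeWords.prod_ne_one (hdet : M.Deterministic) (hdual : M.Dual)
    (hT : M.IsDualSubset T) (hu : M.IsTreeWords T u) {ds : List (M.Q × Ltr A × M.Q)}
    (hds : ∀ d ∈ ds, d ∈ M.E \ T) (hchain : ds.IsChain (fun d d' => d' ≠ edgeRev d))
    (hne : ds ≠ []) : (ds.map fun d => FreeGroup.mk (edgeWord u d)).prod ≠ 1 := by
  classical
  obtain ⟨d, ds, rfl⟩ := List.exists_cons_of_ne_nil hne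
  have hd : d.2.1 :: invRev (u d.2.2) <:+ (FreeGroup.mk (edgeWord u d)).toWord := by
    rw [toWord_mk, (hu.isReduced_edgeWord hdet hdual hT (hds d (.head _))).reduce_eq]
    exact ⟨u d.1, rfl⟩
  rw [List.map_cons, List.prod_cons, Ne, ← toWord_eq_nil_iff, ← List.length_eq_zero_iff]
  have := (hu.suffix_toWord_mul_prod hdet hdual hT ds hds hchain hd).length_le
  simp only [List.length_cons] at this
  omega

lemma IsTreeWords.injective_lift (hdet : M.Deterministic) (hdual : M.Dual)
    (hT : M.IsDualSubset T) (hu : M.IsTreeWords T u) {ι : Type} {f : ι → M.Q × Ltr A × M.Q}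
    (hf : ∀ i, f i ∈ M.E \ T) (hinj : Injective f) (hrev : ∀ i j, f i ≠ edgeRev (f j)) :
    Injective (FreeGroup.lift fun i => FreeGroup.mk (edgeWord u (f i))) := by
  classical
  let σ : ι × Bool → M.Q × Ltr A × M.Q := fun ℓ => cond ℓ.2 (f ℓ.1) (edgeRev (f ℓ.1))
  rw [injective_iff_map_eq_one]
  intro x hx
  by_contra hx1
  refine hu.prod_ne_one hdet hdual hT (ds := x.toWord.map σ) ?_ ?_ (by simpa using hx1) ?_
  · intro d hd
    obtain ⟨⟨i, _ | _⟩, -, rfl⟩ := List.mem_map.mp hd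
    exacts [hT.edgeRev_mem hdual (hf i), hf i]
  · refine (List.isChain_map σ).mpr (isReduced_toWord.imp ?_)
    rintro ⟨i, _ | _⟩ ⟨j, _ | _⟩ h <;> simp only [σ, cond_true, cond_false, edgeRev_edgeRev]
    · exact fun h' => hrev i j h'.symm
    · exact fun h' => absurd (h (hinj h').symm) (by simp)
    · exact fun h' => absurd (h (hinj (by simpa using congrArg edgeRev h')).symm) (by simp)
    · exact hrev j i
  · rw [← mk_toWord (x := x), lift_mk] at hx
    rw [← hx, List.map_map]
    congr 1
    refine List.map_congr_left fun ℓ _ => ?_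
    cases ℓ with | mk i b => cases b <;> simp [σ, mk_edgeWord_edgeRev]

end Freeness

section TreeBasis
variable {A : Type} {M : Autom A} {T : Set (M.Q × Ltr A × M.Q)} {u : M.Q → List (Ltr A)}

def treeBasis (M : Autom A) (T : Set (M.Q × Ltr A × M.Q)) (u : M.Q → List (Ltr A)) :
    Set (FreeGroup A) :=
  (fun e => FreeGroup.mk (edgeWord u e)) '' ({e ∈ M.E | e.2.1.2 = true} \ T)

lemma mk_mul_mk_mul_inv_mem (u : M.Q → List (Ltr A)) {K : Subgroup (FreeGroup A)}
    (hK : ∀ e ∈ M.E, FreeGroup.mk (edgeWord u e) ∈ K) {p q : M.Q} {w : List (Ltr A)}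
    (h : M.Path p w q) : FreeGroup.mk (u p) * FreeGroup.mk w * (FreeGroup.mk (u q))⁻¹ ∈ K := by
  induction (h : M.PathOn M.E p w q) with
  | nil q => simpa only [← one_eq_mk, mul_one, mul_inv_cancel] using K.one_mem
  | @cons p r q a w he _ ih =>
    convert K.mul_mem (hK _ he) ih using 1
    rw [mk_edgeWord, ← List.singleton_append, ← mul_mk]
    group

lemma IsTreeWords.mk_edgeWord_mem_closure (hT : M.IsSpanningTree T)
    (hdet : M.Deterministic) (hdual : M.Dual) (hu : M.IsTreeWords T u)
    {e : M.Q × Ltr A × M.Q} (he : e ∈ M.E) :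
    FreeGroup.mk (edgeWord u e) ∈ Subgroup.closure (M.treeBasis T u) := by
  by_cases heT : e ∈ T
  · rw [hu.mk_edgeWord_of_mem hT hdet heT]
    exact one_mem _
  cases hs : e.2.1.2
  · have hrev := hT.edgeRev_mem hdual ⟨he, heT⟩
    have h := mk_edgeWord_edgeRev u (edgeRev e)
    rw [edgeRev_edgeRev] at h
    rw [h]
    exact inv_mem (Subgroup.subset_closure
      ⟨_, ⟨⟨hrev.1, by simp [edgeRev, Ltr.inv, hs]⟩, hrev.2⟩, rfl⟩)
  · exact Subgroup.subset_closure ⟨e, ⟨⟨he, hs⟩, heT⟩, rfl⟩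

lemma IsTreeWords.closure_treeBasis (hT : M.IsSpanningTree T)
    (hdet : M.Deterministic) (hdual : M.Dual) (hu : M.IsTreeWords T u)
    {H : Subgroup (FreeGroup A)} (hH : M.langRho = H) : Subgroup.closure (M.treeBasis T u) = H := by
  refine le_antisymm ((Subgroup.closure_le _).mpr ?_) fun x hx => ?_
  · rintro _ ⟨e, ⟨⟨he, -⟩, -⟩, rfl⟩
    exact hH ▸ ⟨_, hu.path_edgeWord hT.toIsDualSubset he, rfl⟩
  · obtain ⟨w, hw, rfl⟩ : x ∈ M.langRho := hH ▸ hx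
    simpa [hu.eq_nil hT hdet, ← one_eq_mk] using
      mk_mul_mk_mul_inv_mem u (fun e he => hu.mk_edgeWord_mem_closure hT hdet hdual he) hw

lemma IsTreeWords.injOn_treeBasis (hdet : M.Deterministic) (hdual : M.Dual)
    (hT : M.IsDualSubset T) (hu : M.IsTreeWords T u) :
    Set.InjOn (fun e => FreeGroup.mk (edgeWord u e)) ({e ∈ M.E | e.2.1.2 = true} \ T) :=
  (hu.injOn_mk_edgeWord hdet hdual hT).mono (Set.sdiff_subset_sdiff_left (Set.sep_subset _ _))

lemma IsTreeWords.isFreeBasis_treeBasis (hT : M.IsSpanningTree T)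
    (hdet : M.Deterministic) (hdual : M.Dual) (hu : M.IsTreeWords T u)
    {H : Subgroup (FreeGroup A)} (hH : M.langRho = H) : IsFreeBasis (M.treeBasis T u) H := by
  refine ⟨hu.closure_treeBasis hT hdet hdual hH, FreeGroup.injective_lift_val_image
    (hu.injOn_treeBasis hdet hdual hT.toIsDualSubset) ?_⟩
  refine hu.injective_lift hdet hdual hT.toIsDualSubset (fun e => ⟨e.2.1.1, e.2.2⟩)
    Subtype.val_injective fun e e' h => ?_
  simpa [edgeRev, Ltr.inv, e.2.1.2, e'.2.1.2] using congrArg (·.2.1.2) h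

lemma IsTreeWords.ncard_treeBasis_add_card [Finite M.Q]
    (hT : M.IsSpanningTree T) (hdet : M.Deterministic) (hdual : M.Dual)
    (hu : M.IsTreeWords T u) (hfin : {e ∈ M.E | e.2.1.2 = true}.Finite) :
    (M.treeBasis T u).ncard + Nat.card M.Q = {e ∈ M.E | e.2.1.2 = true}.ncard + 1 := by
  have hpos : {e ∈ M.E | e.2.1.2 = true} ∩ T = {e ∈ T | e.2.1.2 = true} := by
    ext e
    exact ⟨fun h => ⟨h.2, h.1.2⟩, fun h => ⟨⟨hT.subset h.1, h.2⟩, h.1⟩⟩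
  rw [treeBasis, (hu.injOn_treeBasis hdet hdual hT.toIsDualSubset).ncard_image,
    ← hT.ncard_add_one, ← Set.ncard_inter_add_ncard_sdiff_eq_ncard _ T hfin, hpos]
  omega

end TreeBasis

end Autom

theorem spanning_tree_basis_general
    {A : Type} (M : Autom A) (hMinv : M.IsInv)
    (hfin : Finite M.Q) (hEfin : M.E.Finite)
    (H : Subgroup (FreeGroup A)) (hH : M.langRho = ↑H)
    (T : Set (M.Q × Ltr A × M.Q)) (hTE : T ⊆ M.E)
    (hTinv : ∀ p a q, (p, a, q) ∈ T → (q, Ltr.inv a, p) ∈ T)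
    (hTsimple : ∀ p q a b, (p, a, q) ∈ T → (p, b, q) ∈ T → a = b)
    (hTree : (SimpleGraph.fromRel fun x y => ∃ a, (x, a, y) ∈ T).IsTree)
    (u : M.Q → List (Ltr A))
    (hu : ∀ p, IsReducedWord (u p) ∧ M.PathOn T M.q0 (u p) p)
    (B : Set (FreeGroup A))
    (hB : B = {x | ∃ p, ∃ a : A, ∃ q, (p, (a, true), q) ∈ M.E ∧ (p, (a, true), q) ∉ T ∧
      x = FreeGroup.mk (u p ++ (a, true) :: wordInv (u q))}) :
    IsFreeBasis B H ∧
      B.ncard + Nat.card M.Q = {e ∈ M.E | e.2.1.2 = true}.ncard + 1 := by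
  classical
  obtain ⟨hdet, -, hdual⟩ := hMinv
  have hT : M.IsSpanningTree T := ⟨⟨hTE, hTinv⟩, hTsimple, hTree⟩
  have hu : M.IsTreeWords T u :=
    ⟨fun p => isReducedWord_iff_isReduced.mp (hu p).1, fun p => (hu p).2⟩
  obtain rfl : B = M.treeBasis T u := by
    subst hB
    ext x
    constructor
    · rintro ⟨p, a, q, he, heT, rfl⟩
      exact ⟨(p, (a, true), q), ⟨⟨he, rfl⟩, heT⟩, rfl⟩
    · rintro ⟨⟨p, ⟨a, _ | _⟩, q⟩, ⟨⟨he, hpos⟩, heT⟩, rfl⟩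
      exacts [absurd hpos (by simp), ⟨p, a, q, he, heT, rfl⟩]
  exact ⟨hu.isFreeBasis_treeBasis hT hdet hdual hH,
    hu.ncard_treeBasis_add_card hT hdet hdual (hEfin.subset (Set.sep_subset _ _))⟩

/-- Fact 1.7 (spanning tree basis): given a spanning tree `T` of a reduced inverse
automaton representing `H`, the elements `b_e = (u_p a u_q⁻¹)ρ`, for `e = (p,a,q)` a
positively labeled transition not in `T`, form a basis of `H`; in particular
`rank H = e - v + 1` (stated as `rank H + v = e + 1`). -/
theorem spanning_tree_basis
    {A : Type} (M : Autom A) (hMinv : M.IsInv) (hMred : M.IsRed)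
    (hfin : Finite M.Q) (hEfin : M.E.Finite)
    (H : Subgroup (FreeGroup A)) (hH : M.langRho = ↑H)
    (T : Set (M.Q × Ltr A × M.Q)) (hTE : T ⊆ M.E)
    (hTinv : ∀ p a q, (p, a, q) ∈ T → (q, Ltr.inv a, p) ∈ T)
    (hTsimple : ∀ p q a b, (p, a, q) ∈ T → (p, b, q) ∈ T → a = b)
    (hTree : (SimpleGraph.fromRel fun x y => ∃ a, (x, a, y) ∈ T).IsTree)
    (u : M.Q → List (Ltr A))
    (hu : ∀ p, IsReducedWord (u p) ∧ M.PathOn T M.q0 (u p) p)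
    (B : Set (FreeGroup A))
    (hB : B = {x | ∃ p, ∃ a : A, ∃ q, (p, (a, true), q) ∈ M.E ∧ (p, (a, true), q) ∉ T ∧
      x = FreeGroup.mk (u p ++ (a, true) :: wordInv (u q))}) :
    IsFreeBasis B H ∧
      B.ncard + Nat.card M.Q = {e ∈ M.E | e.2.1.2 = true}.ncard + 1 :=
  spanning_tree_basis_general M hMinv hfin hEfin H hH T hTE hTinv hTsimple hTree u hu B hB
end
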